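/- For integers n ≥ 2 and 1 ≤ k ≤ n−1 with k even, the k-circulant digraph C_n(1,…,k) is (⌊(k+2)/4⌋, ⌊(k+2)/4⌋)-robust. -/

import Mathlib

/-- In-neighbor set of vertex `j` in the `k`-circulant digraph `C_n(1,…,k)`:
`K_j = {j-1, j-2, …, j-k}` (mod `n`). -/
def circInNbrs (n k : ℕ) (j : ZMod n) : Finset (ZMod n) :=
  (Finset.Icc 1 k).image fun a : ℕ => j - (a : ZMod n)

/-- `X^r_S = {i ∈ S : |K_i \ S| ≥ r}` in the `k`-circulant digraph. -/
def circXSet (n k r : ℕ) (S : Finset (ZMod n)) : Finset (ZMod n) :=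
  S.filter fun i => r ≤ ((circInNbrs n k i) \ S).card

/-- The `k`-circulant digraph on `n` nodes is `(r,s)`-robust: for every pair of
nonempty disjoint subsets `S1, S2` of the vertex set, `|X^r_{S1}| = |S1|`, or
`|X^r_{S2}| = |S2|`, or `|X^r_{S1}| + |X^r_{S2}| ≥ s`. -/
def circRSRobust (n k r s : ℕ) : Prop :=
  ∀ S1 S2 : Finset (ZMod n), S1.Nonempty → S2.Nonempty → Disjoint S1 S2 →
    (circXSet n k r S1).card = S1.card ∨ (circXSet n k r S2).card = S2.card ∨
      s ≤ (circXSet n k r S1).card + (circXSet n k r S2).card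

/-!
Pick `i₁ ∈ S₁ \ X^r_{S₁}` and `i₂ ∈ S₂ \ X^r_{S₂}`. Then `i₁` has fewer than `r` in-neighbours
in `S₂`, while `i₂` has more than `k - r`. Walking from `i₁` to `i₂` one vertex at a time, the
number of in-neighbours in `S₂` grows by at most one per step, and only when the vertex just left
lies in `S₂`. Each such step taken while the count is still at most `k - r` leaves a vertex of
`X^r_{S₂}` behind, so `|X^r_{S₂}| ≥ k + 2 - 2r ≥ ⌊(k+2)/4⌋`.
-/

open Finset

theorem Nat.min_le_min_add_card_filter_of_le_add_ite {f : ℕ → ℕ} {p : ℕ → Prop}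
    [DecidablePred p] (hstep : ∀ m, f (m + 1) ≤ f m + if p m then 1 else 0) (b d : ℕ) :
    min (f d) b ≤ min (f 0) b + #{m ∈ range d | p m ∧ f m < b} := by
  induction d with
  | zero => simp
  | succ d ih =>
    rw [range_add_one, filter_insert]
    have hd := hstep d
    by_cases hp : p d
    · rw [if_pos hp] at hd
      by_cases hb : f d < b
      · rw [if_pos ⟨hp, hb⟩, card_insert_of_notMem (by simp)]
        omega
      · rw [if_neg fun h => hb h.2]
        omega
    · rw [if_neg hp, add_zero] at hd
      rw [if_neg fun h => hp h.1]
      omega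

theorem ZMod.natCast_injOn_Iio (n : ℕ) : Set.InjOn (fun m : ℕ => (m : ZMod n)) (Set.Iio n) :=
  fun a ha b hb hab => by
    rwa [ZMod.natCast_eq_natCast_iff', Nat.mod_eq_of_lt ha, Nat.mod_eq_of_lt hb] at hab

section Circulant

variable {n k : ℕ}

theorem card_circInNbrs (hkn : k < n) (j : ZMod n) : #(circInNbrs n k j) = k := by
  rw [circInNbrs, card_image_of_injOn, Nat.card_Icc, Nat.add_sub_cancel]
  intro a ha b hb hab
  simp only [coe_Icc, Set.mem_Icc] at ha hb
  exact ZMod.natCast_injOn_Iio n (by simp; omega) (by simp; omega) (sub_right_inj.mp hab)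

theorem circInNbrs_add_one_subset (v : ZMod n) :
    circInNbrs n k (v + 1) ⊆ insert v (circInNbrs n k v) := by
  intro x hx
  simp only [circInNbrs, mem_image, mem_Icc] at hx
  obtain ⟨a, ⟨ha1, hak⟩, rfl⟩ := hx
  obtain rfl | ha1 := eq_or_lt_of_le ha1
  · simp
  · refine mem_insert_of_mem (mem_image.mpr ⟨a - 1, mem_Icc.mpr ⟨by omega, by omega⟩, ?_⟩)
    rw [Nat.cast_sub ha1.le]
    ring

theorem card_circInNbrs_add_one_inter_le (S : Finset (ZMod n)) (v : ZMod n) :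
    #(circInNbrs n k (v + 1) ∩ S) ≤ #(circInNbrs n k v ∩ S) + if v ∈ S then 1 else 0 := by
  have hsub : circInNbrs n k (v + 1) ∩ S ⊆ insert v (circInNbrs n k v) ∩ S :=
    inter_subset_inter_right (circInNbrs_add_one_subset v)
  split_ifs with hv
  · rw [insert_inter_of_mem hv] at hsub
    exact (card_le_card hsub).trans (card_insert_le _ _)
  · rw [insert_inter_of_notMem hv] at hsub
    simpa using card_le_card hsub

theorem mem_circXSet_iff (hkn : k < n) {r : ℕ} {S : Finset (ZMod n)} {v : ZMod n} :
    v ∈ circXSet n k r S ↔ v ∈ S ∧ #(circInNbrs n k v ∩ S) + r ≤ k := by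
  have := card_sdiff_add_card_inter (circInNbrs n k v) S
  rw [card_circInNbrs hkn] at this
  rw [circXSet, mem_filter]
  exact and_congr_right fun _ => by omega

theorem add_two_le_card_circXSet_add (hkn : k < n) {r : ℕ} (S : Finset (ZMod n))
    {j₀ j₁ : ZMod n} (h₀ : #(circInNbrs n k j₀ ∩ S) < r)
    (h₁ : k < #(circInNbrs n k j₁ ∩ S) + r) :
    k + 2 ≤ #(circXSet n k r S) + 2 * r := by
  have : NeZero n := ⟨by omega⟩
  set walk : ℕ → ZMod n := fun m => j₀ + m
  set d := (j₁ - j₀).val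
  have hdn : d < n := ZMod.val_lt _
  have hwalk_d : walk d = j₁ := by simp [walk, d]
  set c : ℕ → ℕ := fun m => #(circInNbrs n k (walk m) ∩ S)
  have hstep : ∀ m, c (m + 1) ≤ c m + if walk m ∈ S then 1 else 0 := fun m => by
    simpa [c, walk, add_assoc] using card_circInNbrs_add_one_inter_le S (walk m)
  have hcount := Nat.min_le_min_add_card_filter_of_le_add_ite hstep (k + 1 - r) d
  have hmaps : Set.MapsTo walk ↑({m ∈ range d | walk m ∈ S ∧ c m < k + 1 - r} : Finset ℕ)
      (circXSet n k r S) := fun m hm => by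
    simp only [coe_filter, mem_range, Set.mem_ofPred_eq] at hm
    exact (mem_circXSet_iff hkn).mpr ⟨hm.2.1, show c m + r ≤ k by omega⟩
  have hinj : Set.InjOn walk ↑({m ∈ range d | walk m ∈ S ∧ c m < k + 1 - r} : Finset ℕ) := by
    intro a ha b hb hab
    simp only [coe_filter, mem_range, Set.mem_ofPred_eq] at ha hb
    exact ZMod.natCast_injOn_Iio n (show a < n by omega) (show b < n by omega)
      (add_left_cancel hab)
  have hcard := card_le_card_of_injOn walk hmaps hinj
  simp only [c, hwalk_d, walk, Nat.cast_zero, add_zero] at hcount hcard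
  omega

theorem circRSRobust_of_add_two_mul_le (hkn : k < n) {r s : ℕ} (hs : s + 2 * r ≤ k + 2) :
    circRSRobust n k r s := by
  intro S₁ S₂ _ _ hdisj
  by_contra! h
  obtain ⟨h₁, h₂, hs_lt⟩ := h
  simp only [circXSet, Ne, card_filter_eq_iff, not_forall, not_le] at h₁ h₂
  obtain ⟨i₁, hi₁S, hi₁⟩ := h₁
  obtain ⟨i₂, -, hi₂⟩ := h₂
  have hfew : #(circInNbrs n k i₁ ∩ S₂) < r := by
    refine lt_of_le_of_lt (card_le_card fun x hx => ?_) hi₁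
    rw [mem_inter] at hx
    exact mem_sdiff.mpr ⟨hx.1, disjoint_right.mp hdisj hx.2⟩
  have hmany : k < #(circInNbrs n k i₂ ∩ S₂) + r := by
    have := card_sdiff_add_card_inter (circInNbrs n k i₂) S₂
    rw [card_circInNbrs hkn] at this
    omega
  have := add_two_le_card_circXSet_add hkn S₂ hfew hmany
  omega

end Circulant

theorem circulant_even_k_rs_robust_general (n k : ℕ) (hn : 2 ≤ n)
    (hk2 : k ≤ n - 1) :
    circRSRobust n k ((k + 2) / 4) ((k + 2) / 4) :=
  circRSRobust_of_add_two_mul_le (by omega) (by omega)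

/-- For even `k`, the `k`-circulant digraph `C_n(1,…,k)` is
`(⌊(k+2)/4⌋, ⌊(k+2)/4⌋)`-robust. -/
theorem circulant_even_k_rs_robust (n k : ℕ) (hn : 2 ≤ n) (hk1 : 1 ≤ k)
    (hk2 : k ≤ n - 1) (hkeven : Even k) :
    circRSRobust n k ((k + 2) / 4) ((k + 2) / 4) :=
  circulant_even_k_rs_robust_general n k hn hk2
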